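/- Let M : ℝ² → Mat₂(ℝ) be a smooth (C^∞) map such that M(0) = I, each matrix M(X) is lower triangular, and M satisfies the differential equation: for all X ∈ ℝ² and all η ∈ ℝ², (DM)(X)[M(X)·η] = M(X)·(DM)(0)[η]. Then M satisfies the functional equation locally: there exists ε > 0 such that for all X, Y ∈ ℝ² with ‖X‖ < ε and ‖Y‖ < ε, one has M(X + M(X)·Y) = M(X)·M(Y). -/

import Mathlib

open Matrix Set

attribute [local instance] Matrix.normedAddCommGroup Matrix.normedSpace

namespace MatODEAux

noncomputable def entryCLM (i j : Fin 2) : Matrix (Fin 2) (Fin 2) ℝ →L[ℝ] ℝ :=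
  LinearMap.toContinuousLinearMap
    { toFun := fun A => A i j
      map_add' := fun _ _ => rfl
      map_smul' := fun _ _ => rfl }

noncomputable def mulVecCLM (q : Fin 2 → ℝ) :
    Matrix (Fin 2) (Fin 2) ℝ →L[ℝ] (Fin 2 → ℝ) :=
  LinearMap.toContinuousLinearMap
    { toFun := fun A => A.mulVec q
      map_add' := fun A B => Matrix.add_mulVec A B q
      map_smul' := fun c A => Matrix.smul_mulVec c A q }

noncomputable def lmulCLM (B : Matrix (Fin 2) (Fin 2) ℝ) :
    Matrix (Fin 2) (Fin 2) ℝ →L[ℝ] Matrix (Fin 2) (Fin 2) ℝ :=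
  LinearMap.toContinuousLinearMap
    { toFun := fun N => B * N
      map_add' := fun _ _ => mul_add _ _ _
      map_smul' := fun _ _ => Matrix.mul_smul _ _ _ }

noncomputable def adjCLM : Matrix (Fin 2) (Fin 2) ℝ →L[ℝ] Matrix (Fin 2) (Fin 2) ℝ :=
  LinearMap.toContinuousLinearMap
    { toFun := fun A => A.adjugate
      map_add' := by
        intro A B
        ext i j
        fin_cases i <;> fin_cases j <;> simp [Matrix.adjugate_fin_two] <;> ring
      map_smul' := by
        intro c A
        ext i j
        fin_cases i <;> fin_cases j <;> simp [Matrix.adjugate_fin_two] }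

theorem hasDerivAt_entry {N : ℝ → Matrix (Fin 2) (Fin 2) ℝ} {N' : Matrix (Fin 2) (Fin 2) ℝ}
    {t : ℝ} (h : HasDerivAt N N' t) (i j : Fin 2) :
    HasDerivAt (fun s => N s i j) (N' i j) t :=
  (entryCLM i j).hasFDerivAt.comp_hasDerivAt t h

theorem hasDerivAt_mulVecconst {N : ℝ → Matrix (Fin 2) (Fin 2) ℝ} {N' : Matrix (Fin 2) (Fin 2) ℝ}
    {t : ℝ} (h : HasDerivAt N N' t) (q : Fin 2 → ℝ) :
    HasDerivAt (fun s => (N s).mulVec q) (N'.mulVec q) t :=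
  (mulVecCLM q).hasFDerivAt.comp_hasDerivAt t h

theorem hasDerivAt_adj {N : ℝ → Matrix (Fin 2) (Fin 2) ℝ} {N' : Matrix (Fin 2) (Fin 2) ℝ}
    {t : ℝ} (h : HasDerivAt N N' t) :
    HasDerivAt (fun s => (N s).adjugate) N'.adjugate t :=
  adjCLM.hasFDerivAt.comp_hasDerivAt t h

theorem hasDerivAt_det {N : ℝ → Matrix (Fin 2) (Fin 2) ℝ} {N' : Matrix (Fin 2) (Fin 2) ℝ}
    {t : ℝ} (h : HasDerivAt N N' t) :
    HasDerivAt (fun s => (N s).det)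
      (N' 0 0 * N t 1 1 + N t 0 0 * N' 1 1 - (N' 0 1 * N t 1 0 + N t 0 1 * N' 1 0)) t := by
  have := ((hasDerivAt_entry h 0 0).mul (hasDerivAt_entry h 1 1)).sub
      ((hasDerivAt_entry h 0 1).mul (hasDerivAt_entry h 1 0))
  simpa [Matrix.det_fin_two, Pi.mul_def, Pi.sub_def] using this

noncomputable def myInv (A : Matrix (Fin 2) (Fin 2) ℝ) : Matrix (Fin 2) (Fin 2) ℝ :=
  (A.det)⁻¹ • A.adjugate

theorem myInv_eq (A : Matrix (Fin 2) (Fin 2) ℝ) : myInv A = A⁻¹ := by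
  rw [Matrix.inv_def, Ring.inverse_eq_inv']
  rfl

theorem myInv_one : myInv (1 : Matrix (Fin 2) (Fin 2) ℝ) = 1 := by
  simp [myInv]

theorem hasDerivAt_myInv {N : ℝ → Matrix (Fin 2) (Fin 2) ℝ} {N' : Matrix (Fin 2) (Fin 2) ℝ}
    {t : ℝ} (h : HasDerivAt N N' t) (hd : (N t).det ≠ 0) :
    HasDerivAt (fun s => myInv (N s)) (-(myInv (N t) * N' * myInv (N t))) t := by
  have h1 := (hasDerivAt_det h).inv hd
  have h3 := h1.smul (hasDerivAt_adj h)
  refine (HasDerivAt.congr_deriv h3 ?_ : HasDerivAt (fun s => myInv (N s)) _ t); symm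
  rw [Matrix.det_fin_two] at hd
  ext i j
  fin_cases i <;> fin_cases j <;>
    · simp only [myInv, Matrix.adjugate_fin_two, Matrix.neg_apply, Matrix.add_apply,
        Matrix.smul_apply, Matrix.mul_apply, Fin.sum_univ_two, Matrix.det_fin_two,
        Matrix.cons_val_zero, Matrix.cons_val_one, Matrix.head_cons, Matrix.head_fin_const,
        Matrix.cons_val', Matrix.empty_val', Matrix.cons_val_fin_one, smul_eq_mul,
        Matrix.of_apply, div_eq_mul_inv, Fin.zero_eta, Fin.mk_one, Pi.inv_apply]
      field_simp
      ring

theorem mulBB : IsBoundedBilinearMap ℝ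
    (fun p : Matrix (Fin 2) (Fin 2) ℝ × Matrix (Fin 2) (Fin 2) ℝ => p.1 * p.2) where
  add_left := fun A B C => add_mul A B C
  smul_left := fun c A B => smul_mul_assoc c A B
  add_right := fun A B C => mul_add A B C
  smul_right := fun c A B => mul_smul_comm c A B
  bound := by
    refine ⟨2, two_pos, fun A B => ?_⟩
    rw [Matrix.norm_le_iff (by positivity)]
    intro i j
    calc ‖(A * B) i j‖ = ‖A i 0 * B 0 j + A i 1 * B 1 j‖ := by
          rw [Matrix.mul_apply, Fin.sum_univ_two]
      _ ≤ ‖A i 0 * B 0 j‖ + ‖A i 1 * B 1 j‖ := norm_add_le _ _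
      _ ≤ ‖A‖ * ‖B‖ + ‖A‖ * ‖B‖ := by
          gcongr
          · exact (norm_mul_le _ _).trans (by
              gcongr <;> exact Matrix.norm_entry_le_entrywise_sup_norm _)
          · exact (norm_mul_le _ _).trans (by
              gcongr <;> exact Matrix.norm_entry_le_entrywise_sup_norm _)
      _ = 2 * ‖A‖ * ‖B‖ := by ring

theorem mvBB : IsBoundedBilinearMap ℝ
    (fun p : Matrix (Fin 2) (Fin 2) ℝ × (Fin 2 → ℝ) => p.1.mulVec p.2) where
  add_left := fun A B v => Matrix.add_mulVec A B v
  smul_left := fun c A v => Matrix.smul_mulVec c A v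
  add_right := fun A u v => Matrix.mulVec_add A u v
  smul_right := fun c A v => Matrix.mulVec_smul A c v
  bound := by
    refine ⟨2, two_pos, fun A v => ?_⟩
    rw [pi_norm_le_iff_of_nonneg (by positivity)]
    intro i
    calc ‖A.mulVec v i‖ = ‖A i 0 * v 0 + A i 1 * v 1‖ := by
          simp [Matrix.mulVec, dotProduct, Fin.sum_univ_two]
      _ ≤ ‖A i 0 * v 0‖ + ‖A i 1 * v 1‖ := norm_add_le _ _
      _ ≤ ‖A‖ * ‖v‖ + ‖A‖ * ‖v‖ := by
          gcongr
          · exact (norm_mul_le _ _).trans (by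
              gcongr
              · exact Matrix.norm_entry_le_entrywise_sup_norm _
              · exact norm_le_pi_norm v 0)
          · exact (norm_mul_le _ _).trans (by
              gcongr
              · exact Matrix.norm_entry_le_entrywise_sup_norm _
              · exact norm_le_pi_norm v 1)
      _ = 2 * ‖A‖ * ‖v‖ := by ring

end MatODEAux

open MatODEAux

set_option maxHeartbeats 1000000 in
theorem matrix_differential_implies_functional_locally
    (M : EuclideanSpace ℝ (Fin 2) → Matrix (Fin 2) (Fin 2) ℝ)
    (hM : ContDiff ℝ (⊤ : ℕ∞) M) (h0 : M 0 = 1)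
    (hlt : ∀ X : EuclideanSpace ℝ (Fin 2), M X 0 1 = 0)
    (hde : ∀ (X η : EuclideanSpace ℝ (Fin 2)),
      fderiv ℝ M X ((WithLp.equiv 2 (Fin 2 → ℝ)).symm ((M X).mulVec η)) =
        M X * fderiv ℝ M 0 η) :
    ∃ ε > 0, ∀ X Y : EuclideanSpace ℝ (Fin 2), ‖X‖ < ε → ‖Y‖ < ε →
      M (X + (WithLp.equiv 2 (Fin 2 → ℝ)).symm ((M X).mulVec Y)) = M X * M Y := by
  classical
  have hMd : Differentiable ℝ M := hM.differentiable (by simp)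
  have hMc : Continuous M := hM.continuous
  set eL : (Fin 2 → ℝ) →L[ℝ] EuclideanSpace ℝ (Fin 2) :=
    (EuclideanSpace.equiv (Fin 2) ℝ).symm.toContinuousLinearMap with heL
  set LE : (Fin 2 → ℝ) →L[ℝ] Matrix (Fin 2) (Fin 2) ℝ := (fderiv ℝ M 0).comp eL with hLE
  -- key consequence of the differential equation
  have key : ∀ (Z q : EuclideanSpace ℝ (Fin 2)), (M Z).det ≠ 0 →
      fderiv ℝ M Z q = M Z * LE ((myInv (M Z)).mulVec q) := by
    intro Z q hdz
    have h2 : (WithLp.equiv 2 (Fin 2 → ℝ)).symm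
        ((M Z).mulVec (eL ((myInv (M Z)).mulVec q))) = q := by
      rw [Equiv.symm_apply_eq]
      show (M Z).mulVec ((myInv (M Z)).mulVec q) = (q : Fin 2 → ℝ)
      rw [Matrix.mulVec_mulVec, myInv_eq, Matrix.mul_nonsing_inv _ (isUnit_iff_ne_zero.mpr hdz),
        Matrix.one_mulVec]
    have h1 := hde Z (eL ((myInv (M Z)).mulVec q))
    rw [h2] at h1
    exact h1
  -- the (autonomous) vector field for the ODE argument
  set w : Matrix (Fin 2) (Fin 2) ℝ × (Fin 2 → ℝ) → Matrix (Fin 2) (Fin 2) ℝ × (Fin 2 → ℝ) :=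
    fun p => (p.1 * LE p.2, -((LE p.2).mulVec p.2)) with hw
  have hwcd : ContDiff ℝ 1 w := by
    apply ContDiff.prodMk
    · exact mulBB.contDiff.comp (contDiff_fst.prodMk (LE.contDiff.comp contDiff_snd))
    · exact (mvBB.contDiff.comp ((LE.contDiff.comp contDiff_snd).prodMk contDiff_snd)).neg
  obtain ⟨K, tset, htset, hK⟩ :=
    (hwcd.contDiffAt (x := ((1 : Matrix (Fin 2) (Fin 2) ℝ), (0 : Fin 2 → ℝ)))).exists_lipschitzOnWith
  obtain ⟨δ, hδpos, hδ⟩ := Metric.mem_nhds_iff.mp htset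
  have hdetc : Continuous fun N : Matrix (Fin 2) (Fin 2) ℝ => N.det := continuous_id.matrix_det
  have hOopen : IsOpen {N : Matrix (Fin 2) (Fin 2) ℝ | N.det ≠ 0} :=
    (isOpen_ne (x := (0:ℝ))).preimage hdetc
  obtain ⟨r₁, hr₁pos, hr₁⟩ := Metric.isOpen_iff.mp hOopen 1 (by simp)
  set ρ := min (δ / 2) (r₁ / 2) with hρ
  have hρpos : 0 < ρ := lt_min (by linarith) (by linarith)
  have hmemt : ∀ (N : Matrix (Fin 2) (Fin 2) ℝ) (η : Fin 2 → ℝ),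
      dist N 1 < ρ → dist η 0 < ρ → (N, η) ∈ tset := by
    intro N η h1 h2
    apply hδ
    rw [Metric.mem_ball, Prod.dist_eq]
    have hρδ : ρ < δ := lt_of_le_of_lt (min_le_left _ _) (by linarith)
    exact max_lt (h1.trans hρδ) (h2.trans hρδ)
  have hdetne : ∀ N : Matrix (Fin 2) (Fin 2) ℝ, dist N 1 < ρ → N.det ≠ 0 := by
    intro N h
    have hρr : ρ < r₁ := lt_of_le_of_lt (min_le_right _ _) (by linarith)
    exact hr₁ (Metric.mem_ball.mpr (h.trans hρr))
  -- eventual smallness of the relevant quantities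
  have evball : ∀ {β : Type} [PseudoMetricSpace β]
      (φ : EuclideanSpace ℝ (Fin 2) × EuclideanSpace ℝ (Fin 2) × EuclideanSpace ℝ (Fin 2) → β)
      (v : β), ContinuousAt φ 0 → φ 0 = v →
      ∀ᶠ p in nhds (0 : EuclideanSpace ℝ (Fin 2) × EuclideanSpace ℝ (Fin 2) ×
        EuclideanSpace ℝ (Fin 2)), dist (φ p) v < ρ := by
    intro β _ φ v h hv0
    have h1 := h.preimage_mem_nhds (Metric.ball_mem_nhds (φ 0) hρpos)
    rw [hv0] at h1
    filter_upwards [h1] with p hp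
    exact Metric.mem_ball.mp hp
  have hmvc : Continuous (fun p : Matrix (Fin 2) (Fin 2) ℝ × (Fin 2 → ℝ) => p.1.mulVec p.2) :=
    mvBB.continuous
  have hmulc : Continuous
      (fun p : Matrix (Fin 2) (Fin 2) ℝ × Matrix (Fin 2) (Fin 2) ℝ => p.1 * p.2) :=
    mulBB.continuous
  have hmyInvCA : ∀ {A : Matrix (Fin 2) (Fin 2) ℝ}, A.det ≠ 0 → ContinuousAt myInv A := by
    intro A h
    exact ContinuousAt.smul ((hdetc.continuousAt).inv₀ h)
      (continuous_id.matrix_adjugate.continuousAt)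
  -- the base-point curve map
  have hCc : Continuous (fun p : EuclideanSpace ℝ (Fin 2) × EuclideanSpace ℝ (Fin 2) ×
      EuclideanSpace ℝ (Fin 2) => p.1 + eL ((M p.1).mulVec p.2.2)) := by
    exact continuous_fst.add (eL.continuous.comp
      (hmvc.comp ((hMc.comp continuous_fst).prodMk ((PiLp.continuous_ofLp 2 _).comp continuous_snd.snd))))
  have hC0 : (fun p : EuclideanSpace ℝ (Fin 2) × EuclideanSpace ℝ (Fin 2) ×
      EuclideanSpace ℝ (Fin 2) => p.1 + eL ((M p.1).mulVec p.2.2)) 0 = 0 := by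
    show (0 : EuclideanSpace ℝ (Fin 2)) + eL ((M 0).mulVec 0) = 0
    rw [Matrix.mulVec_zero, map_zero, add_zero]
  have hdet1 : (M (0:EuclideanSpace ℝ (Fin 2))).det ≠ 0 := by simp [h0]
  have hdetaux : (M ((0 : EuclideanSpace ℝ (Fin 2)) + eL ((M 0).mulVec 0))).det ≠ 0 := by
    rw [Matrix.mulVec_zero, map_zero, add_zero]
    exact hdet1
  have i1 : ContinuousAt (fun p : EuclideanSpace ℝ (Fin 2) × EuclideanSpace ℝ (Fin 2) ×
      EuclideanSpace ℝ (Fin 2) => myInv (M (p.1 + eL ((M p.1).mulVec p.2.2)))) 0 :=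
    ContinuousAt.comp (g := myInv) (hmyInvCA hdetaux) ((hMc.comp hCc).continuousAt)
  have e1 := evball (fun p => M (p.1 + eL ((M p.1).mulVec p.2.2))) 1
    ((hMc.comp hCc).continuousAt)
    (by show M ((0 : EuclideanSpace ℝ (Fin 2)) + eL ((M 0).mulVec 0)) = 1
        rw [Matrix.mulVec_zero, map_zero, add_zero, h0])
  have e2 := evball (fun p => (myInv (M (p.1 + eL ((M p.1).mulVec p.2.2)))).mulVec
      ((M p.1).mulVec p.2.1)) 0
    ((hmvc.continuousAt).comp (ContinuousAt.prodMk i1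
      ((hmvc.comp ((hMc.comp continuous_fst).prodMk ((PiLp.continuous_ofLp 2 _).comp continuous_snd.fst))).continuousAt)))
    (by show (myInv (M ((0 : EuclideanSpace ℝ (Fin 2)) + eL ((M 0).mulVec 0)))).mulVec
          ((M 0).mulVec 0) = 0
        rw [Matrix.mulVec_zero, Matrix.mulVec_zero])
  have e3 := evball (fun p => M p.1 * M p.2.2) 1
    ((hmulc.comp ((hMc.comp continuous_fst).prodMk (hMc.comp continuous_snd.snd))).continuousAt)
    (by show M 0 * M 0 = 1; rw [h0, mul_one])
  have e4 := evball (fun p => (myInv (M p.2.2)).mulVec p.2.1) 0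
    ((hmvc.continuousAt).comp (ContinuousAt.prodMk
      (ContinuousAt.comp (hmyInvCA (by show (M (0:EuclideanSpace ℝ (Fin 2))).det ≠ 0; exact hdet1))
        (hMc.comp continuous_snd.snd).continuousAt)
      ((PiLp.continuous_ofLp 2 _).comp continuous_snd.fst).continuousAt))
    (by show (myInv (M 0)).mulVec (0 : Fin 2 → ℝ) = 0
        rw [Matrix.mulVec_zero])
  have e5 := evball (fun p => M p.2.2) 1 ((hMc.comp continuous_snd.snd).continuousAt)
    (by show M 0 = 1; exact h0)
  have hall := e1.and (e2.and (e3.and (e4.and e5)))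
  rw [Metric.eventually_nhds_iff] at hall
  obtain ⟨ε, hεpos, hε⟩ := hall
  refine ⟨ε, hεpos, ?_⟩
  intro X Y hX hY
  set Q : EuclideanSpace ℝ (Fin 2) := (WithLp.equiv 2 (Fin 2 → ℝ)).symm ((M X).mulVec Y) with hQ
  have hQv : ∀ N : Matrix (Fin 2) (Fin 2) ℝ, N.mulVec ((M X).mulVec Y) = N.mulVec Q :=
    fun _ => rfl
  have hsm : ∀ t : ℝ, (M X).mulVec (t • Y) = t • ((M X).mulVec Y) := by
    intro t
    funext i
    simp [Matrix.mulVec, dotProduct, Fin.sum_univ_two, PiLp.smul_apply, smul_eq_mul,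
      Pi.smul_apply, mul_add]
    fin_cases i <;> simp <;> ring
  have hCt : ∀ t : ℝ, X + eL ((M X).mulVec (t • Y)) = X + t • Q := by
    intro t
    rw [hsm, _root_.map_smul]
    rfl
  have hcond : ∀ t : ℝ, t ∈ Icc (0:ℝ) 1 →
      dist (M (X + t • Q)) 1 < ρ ∧ dist ((myInv (M (X + t • Q))).mulVec Q) 0 < ρ ∧
      dist (M X * M (t • Y)) 1 < ρ ∧ dist ((myInv (M (t • Y))).mulVec Y) 0 < ρ ∧
      dist (M (t • Y)) 1 < ρ := by
    intro t ht
    have htY : ‖t • Y‖ ≤ ‖Y‖ := by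
      rw [norm_smul, Real.norm_eq_abs]
      exact mul_le_of_le_one_left (norm_nonneg _) (abs_le.mpr ⟨by linarith [ht.1], ht.2⟩)
    have hdd : dist (X, (Y, t • Y)) (0 : EuclideanSpace ℝ (Fin 2) × EuclideanSpace ℝ (Fin 2) ×
        EuclideanSpace ℝ (Fin 2)) < ε := by
      simp only [Prod.dist_eq, Prod.fst_zero, Prod.snd_zero, dist_zero_right]
      exact max_lt hX (max_lt hY (lt_of_le_of_lt htY hY))
    obtain ⟨c1, c2, c3, c4, c5⟩ := hε hdd
    have c1' : dist (M (X + eL ((M X).mulVec (t • Y)))) 1 < ρ := c1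
    have c2' : dist ((myInv (M (X + eL ((M X).mulVec (t • Y))))).mulVec ((M X).mulVec Y)) 0 < ρ :=
      c2
    have c3' : dist (M X * M (t • Y)) 1 < ρ := c3
    have c4' : dist ((myInv (M (t • Y))).mulVec Y) 0 < ρ := c4
    have c5' : dist (M (t • Y)) 1 < ρ := c5
    rw [hCt] at c1' c2'
    rw [hQv] at c2'
    exact ⟨c1', c2', c3', c4', c5'⟩
  set f : ℝ → Matrix (Fin 2) (Fin 2) ℝ × (Fin 2 → ℝ) :=
    fun t => (M (X + t • Q), (myInv (M (X + t • Q))).mulVec Q) with hfdef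
  set g : ℝ → Matrix (Fin 2) (Fin 2) ℝ × (Fin 2 → ℝ) :=
    fun t => (M X * M (t • Y), (myInv (M (t • Y))).mulVec Y) with hgdef
  have hder_f : ∀ t ∈ Icc (0:ℝ) 1, HasDerivAt f (w (f t)) t := by
    intro t ht
    obtain ⟨c1, c2, _, _, _⟩ := hcond t ht
    have hdF : (M (X + t • Q)).det ≠ 0 := hdetne _ c1
    have hcd : HasDerivAt (fun s : ℝ => X + s • Q) Q t := by
      simpa using ((hasDerivAt_id t).smul_const Q).const_add X
    have h1 : HasDerivAt (fun s => M (X + s • Q))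
        (M (X + t • Q) * LE ((myInv (M (X + t • Q))).mulVec Q)) t := by
      have h := (hMd (X + t • Q)).hasFDerivAt.comp_hasDerivAt t hcd
      exact h.congr_deriv (key _ Q hdF)
    have hmm : myInv (M (X + t • Q)) *
        (M (X + t • Q) * LE ((myInv (M (X + t • Q))).mulVec Q)) =
        LE ((myInv (M (X + t • Q))).mulVec Q) := by
      rw [← mul_assoc, myInv_eq, Matrix.nonsing_inv_mul _ (isUnit_iff_ne_zero.mpr hdF), one_mul]
    have h2 : HasDerivAt (fun s => (myInv (M (X + s • Q))).mulVec Q)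
        (-((LE ((myInv (M (X + t • Q))).mulVec Q)).mulVec
          ((myInv (M (X + t • Q))).mulVec Q))) t := by
      have hm := hasDerivAt_mulVecconst (hasDerivAt_myInv h1 hdF) Q
      have heq : (-(myInv (M (X + t • Q)) *
          (M (X + t • Q) * LE ((myInv (M (X + t • Q))).mulVec Q)) *
          myInv (M (X + t • Q)))).mulVec Q =
          -((LE ((myInv (M (X + t • Q))).mulVec Q)).mulVec
            ((myInv (M (X + t • Q))).mulVec Q)) := by
        rw [Matrix.neg_mulVec, hmm, ← Matrix.mulVec_mulVec]
      rw [heq] at hm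
      exact hm
    exact h1.prodMk h2
  have hder_g : ∀ t ∈ Icc (0:ℝ) 1, HasDerivAt g (w (g t)) t := by
    intro t ht
    obtain ⟨_, _, c3, c4, c5⟩ := hcond t ht
    have hdW : (M (t • Y)).det ≠ 0 := hdetne _ c5
    have hYd : HasDerivAt (fun s : ℝ => s • Y) Y t := by
      simpa using (hasDerivAt_id t).smul_const Y
    have hMt : HasDerivAt (fun s => M (s • Y))
        (M (t • Y) * LE ((myInv (M (t • Y))).mulVec Y)) t := by
      have h := (hMd (t • Y)).hasFDerivAt.comp_hasDerivAt t hYd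
      exact h.congr_deriv (key _ Y hdW)
    have h1 : HasDerivAt (fun s => M X * M (s • Y))
        ((M X * M (t • Y)) * LE ((myInv (M (t • Y))).mulVec Y)) t := by
      have h := (lmulCLM (M X)).hasFDerivAt.comp_hasDerivAt t hMt
      have h' : HasDerivAt (fun s => M X * M (s • Y))
          (M X * (M (t • Y) * LE ((myInv (M (t • Y))).mulVec Y))) t := h
      rw [← mul_assoc] at h'
      exact h'
    have hmm : myInv (M (t • Y)) * (M (t • Y) * LE ((myInv (M (t • Y))).mulVec Y)) =
        LE ((myInv (M (t • Y))).mulVec Y) := by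
      rw [← mul_assoc, myInv_eq, Matrix.nonsing_inv_mul _ (isUnit_iff_ne_zero.mpr hdW), one_mul]
    have h2 : HasDerivAt (fun s => (myInv (M (s • Y))).mulVec Y)
        (-((LE ((myInv (M (t • Y))).mulVec Y)).mulVec ((myInv (M (t • Y))).mulVec Y))) t := by
      have hm := hasDerivAt_mulVecconst (hasDerivAt_myInv hMt hdW) Y
      have heq : (-(myInv (M (t • Y)) * (M (t • Y) * LE ((myInv (M (t • Y))).mulVec Y)) *
          myInv (M (t • Y)))).mulVec Y =
          -((LE ((myInv (M (t • Y))).mulVec Y)).mulVec ((myInv (M (t • Y))).mulVec Y)) := by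
        rw [Matrix.neg_mulVec, hmm, ← Matrix.mulVec_mulVec]
      rw [heq] at hm
      exact hm
    exact h1.prodMk h2
  have hdX : (M X).det ≠ 0 := by
    have := hdetne _ (hcond 0 (left_mem_Icc.mpr zero_le_one)).1
    rwa [zero_smul, add_zero] at this
  have hf0 : f 0 = g 0 := by
    have h1 : M (X + (0:ℝ) • Q) = M X * M ((0:ℝ) • Y) := by
      rw [zero_smul, add_zero, zero_smul, h0, mul_one]
    have h2 : (myInv (M (X + (0:ℝ) • Q))).mulVec Q = (myInv (M ((0:ℝ) • Y))).mulVec Y := by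
      rw [zero_smul, add_zero, zero_smul, h0, myInv_one, Matrix.one_mulVec]
      show (myInv (M X)).mulVec ((M X).mulVec Y) = (Y : Fin 2 → ℝ)
      rw [Matrix.mulVec_mulVec, myInv_eq, Matrix.nonsing_inv_mul _ (isUnit_iff_ne_zero.mpr hdX),
        Matrix.one_mulVec]
    exact Prod.ext h1 h2
  have hcf : ContinuousOn f (Icc (0:ℝ) 1) :=
    fun t ht => ((hder_f t ht).continuousAt).continuousWithinAt
  have hcg : ContinuousOn g (Icc (0:ℝ) 1) :=
    fun t ht => ((hder_g t ht).continuousAt).continuousWithinAt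
  have hfs : ∀ t ∈ Ico (0:ℝ) 1, f t ∈ tset := by
    intro t ht
    obtain ⟨c1, c2, _, _, _⟩ := hcond t (Ico_subset_Icc_self ht)
    exact hmemt _ _ c1 c2
  have hgs : ∀ t ∈ Ico (0:ℝ) 1, g t ∈ tset := by
    intro t ht
    obtain ⟨_, _, c3, c4, _⟩ := hcond t (Ico_subset_Icc_self ht)
    exact hmemt _ _ c3 c4
  have heqon := ODE_solution_unique_of_mem_Icc_right (v := fun _ => w) (s := fun _ => tset)
    (fun _ _ => hK) hcf
    (fun t ht => (hder_f t (Ico_subset_Icc_self ht)).hasDerivWithinAt) hfs hcg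
    (fun t ht => (hder_g t (Ico_subset_Icc_self ht)).hasDerivWithinAt) hgs hf0
  have h11 := heqon (right_mem_Icc.mpr zero_le_one)
  have hfst := congrArg Prod.fst h11
  have hfst' : M (X + (1:ℝ) • Q) = M X * M ((1:ℝ) • Y) := hfst
  rw [one_smul, one_smul] at hfst'
  exact hfst'
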